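/- Suppose the role CFG (V_r, E_r) with labeling a_node, entry vertex v₀, tag set L, disjoint tagged edge sets E_entry, E_exit ⊆ E_r, and tag assignment l_edge satisfies: (a) no vertex is labeled CopyAttr or PropagateAttrs; (b) an edge (u, v) ∈ E_entry if and only if a_node(u) = EnterCtx(i) for some i, and an edge (u, v) ∈ E_exit if and only if a_node(v) = LeaveCtx; (c) every tag l ∈ L tags exactly one entry edge and exactly one exit edge; (d) the target of every entry edge is not labeled LeaveCtx, and v₀ and the final vertices considered below are not labeled LeaveCtx. Then for every vertex v_e ∈ V_r: if there exists a valid path w_e from v₀ to v_e with f_e(w_e) ≠ ∅, then there exists a valid path w'_e from v₀ to v_e with f_e(w'_e) ≠ ∅ such that no tag occurs three or more times in the tag stack f_stack(w'_e, ε) (i.e., there do not exist three distinct positions of f_stack(w'_e, ε) holding the same tag). -/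

import Mathlib

/-!
Common model: Neverlang semantic-action verification (nlgcheck).

A production context is a pair `(k, m)` with `k ∈ ℕ` and `m : ℕ × I ⇀ T` a
partial attribute map (modeled as `ℕ × I → Option T`).  A production context
stack is a *nonempty* list `c₀ … c_n` of production contexts (with `c_n` the
top); it is modeled as the pair of its top element `c_n` and the list of the
remaining elements `[c_{n-1}, …, c₀]` (top-first order).
-/

/-- Attribute maps: partial maps from (position, attribute name) to types. -/
abbrev AttrMap (I T : Type) := ℕ × I → Option T

/-- A production context: a position `k` together with an attribute map `m`. -/
abbrev ProdCtx (I T : Type) := ℕ × AttrMap I T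

/-- A nonempty production context stack: the top context `c_n` together with
the list `[c_{n-1}, …, c₀]` of the contexts below it. -/
abbrev Stk (I T : Type) := ProdCtx I T × List (ProdCtx I T)

/-- CFG node actions. -/
inductive Act (I T : Type) : Type where
  | writeAttr (i : ℕ) (η : I) (t : T)
  | readAttr (i : ℕ) (η : I) (t : T)
  | copyAttr (iDst : ℕ) (ηDst : I) (iSrc : ℕ) (ηSrc : I)
  | checkAttrType (i : ℕ) (η : I) (t : T)
  | propagateAttrs
  | beginEvalMetaAction (i : ℕ)
  | endEvalMetaAction
  | enterCtx (i : ℕ)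
  | leaveCtx
  | nop
  | ignoreBranchAction

/-- Violations. -/
inductive Viol (I T : Type) : Type where
  | missingAttr (i : ℕ) (η : I)
  | badAttrT (i : ℕ) (η : I) (tReq : T) (tProv : T)
  | attrTypeDynamicallyChecked (i : ℕ) (η : I) (t : T)

variable {I T : Type} [DecidableEq I]

/-- Update an attribute map at key `(i, η)` with value `t`. -/
def updMap (m : AttrMap I T) (i : ℕ) (η : I) (t : T) : AttrMap I T :=
  fun p => if p = (i, η) then some t else m p

/-- `get(C, i, η)` is `m_n(i, η)` when `i ≥ 1` or `C = c₀`, and is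
`m_{n-1}(k_n, η)` when `i = 0` and `n ≥ 1`. -/
def getA : Stk I T → ℕ → I → Option T
  | (c, []), i, η => c.2 (i, η)
  | (c, c' :: _), i, η => if i = 0 then c'.2 (c.1, η) else c.2 (i, η)

/-- `put(C, i, η, t)` updates `m_n` with `(i, η) ↦ t` when `i ≥ 1` or `C = c₀`,
and updates `m_{n-1}` with `(k_n, η) ↦ t` when `i = 0` and `n ≥ 1`. -/
def putA : Stk I T → ℕ → I → T → Stk I T
  | (c, []), i, η, t => ((c.1, updMap c.2 i η t), [])
  | (c, c' :: rest), i, η, t =>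
      if i = 0 then (c, (c'.1, updMap c'.2 c.1 η t) :: rest)
      else ((c.1, updMap c.2 i η t), c' :: rest)

/-- Push a production context onto the stack. -/
def pushA (C : Stk I T) (c : ProdCtx I T) : Stk I T := (c, C.1 :: C.2)

/-- Pop the top production context off the stack (identity on a singleton
stack, which never occurs in well-formed executions). -/
def popA : Stk I T → Stk I T
  | (c, []) => (c, [])
  | (_, c' :: rest) => (c', rest)

/-- `getAll(C, i)`: all the name/type attribute pairs at position `i` of the
current node, as a partial map from names to types. -/
def getAllA (C : Stk I T) (i : ℕ) : I → Option T := fun η => getA C i η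

/-- `merge(m, X, j)`: add every pair of `X` at position `j` into `m` without
overwriting existing keys. -/
def mergeMap (m : AttrMap I T) (j : ℕ) (X : I → Option T) : AttrMap I T :=
  fun p =>
    if p.1 = j then
      match m p with
      | some t => some t
      | none => X p.2
    else m p

/-- `putAll(C, i, X)`: add each pair of `X` at position `i` (resp. at `k_n` in
`m_{n-1}` when `i = 0` and `n ≥ 1`), without overwriting existing keys. -/
def putAllA : Stk I T → ℕ → (I → Option T) → Stk I T
  | (c, []), i, X => ((c.1, mergeMap c.2 i X), [])
  | (c, c' :: rest), i, X =>
      if i = 0 then (c, (c'.1, mergeMap c'.2 c.1 X) :: rest)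
      else ((c.1, mergeMap c.2 i X), c' :: rest)

/-- The head of a production context stack:
`head(C) = m₀` if `C = c₀`, and
`head(C) = m_n ∪ {(0, η) ↦ t : m_{n-1}(k_n, η) = t}` if `n ≥ 1`
(the entries at position `0` come from `m_{n-1}` at key `(k_n, ·)`; the entries
at positions `i ≥ 1` come from `m_n`). -/
def headC : Stk I T → AttrMap I T
  | (c, []) => c.2
  | (c, c' :: _) => fun p => if p.1 = 0 then c'.2 (c.1, p.2) else c.2 p

/-- A production context with empty attribute map, at position `i`. -/
def emptyCtx (i : ℕ) : ProdCtx I T := (i, fun _ => none)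

/-- `f_aCtx`: the context-transformation component of the action semantics
`f_action`. -/
def fACtx (C : Stk I T) : Act I T → Stk I T
  | .writeAttr i η t => putA C i η t
  | .copyAttr iDst ηDst iSrc ηSrc =>
      match getA C iSrc ηSrc with
      | none => C
      | some t => putA C iDst ηDst t
  | .propagateAttrs => putAllA C 0 (getAllA C 1)
  | .enterCtx i => pushA C (emptyCtx i)
  | .leaveCtx => popA C
  | _ => C

/-- `f_aErr`: the violation component of the action semantics `f_action`,
relative to a (decidable) subtyping relation `sub`. -/
def fAErr (sub : T → T → Prop) [DecidableRel sub] (C : Stk I T) :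
    Act I T → Set (Viol I T)
  | .readAttr i η t =>
      match getA C i η with
      | none => {Viol.missingAttr i η}
      | some tp => if sub tp t then ∅ else {Viol.badAttrT i η t tp}
  | .copyAttr _ _ iSrc ηSrc =>
      match getA C iSrc ηSrc with
      | none => {Viol.missingAttr iSrc ηSrc}
      | some _ => ∅
  | .checkAttrType i η t => {Viol.attrTypeDynamicallyChecked i η t}
  | _ => ∅

/-- `f_action`: maps a production context stack and an action to a new
production context stack and a set of violations. -/
def fAction (sub : T → T → Prop) [DecidableRel sub] (C : Stk I T)
    (a : Act I T) : Stk I T × Set (Viol I T) :=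
  (fACtx C a, fAErr sub C a)

variable {V : Type}

/-- `f_pCtx`: overall change to the production context stack along a path
(a list of CFG vertices), given the labeling `a_node`. -/
def fPCtx (aNode : V → Act I T) : List V → Stk I T → Stk I T
  | [], C => C
  | v :: w', C => fPCtx aNode w' (fACtx C (aNode v))

/-- `f_pErr`: the set of violations detected at the last node of a path:
`f_pErr(ε, C) = ∅` and `f_pErr(w'·v, C) = f_aErr(f_pCtx(w', C), a_node(v))`. -/
def fPErr (sub : T → T → Prop) [DecidableRel sub] (aNode : V → Act I T)
    (w : List V) (C : Stk I T) : Set (Viol I T) :=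
  match w.getLast? with
  | none => ∅
  | some v => fAErr sub (fPCtx aNode w.dropLast C) (aNode v)

/-- `A_pb`: prefixes of balanced action sequences. -/
inductive IsBalPrefix : List (Act I T) → Prop where
  | nil : IsBalPrefix []
  | cons {b : List (Act I T)} (a : Act I T) (hb : IsBalPrefix b)
      (ha : a ≠ .leaveCtx) : IsBalPrefix (a :: b)
  | snoc {b : List (Act I T)} (a : Act I T) (hb : IsBalPrefix b)
      (ha : a ≠ .leaveCtx) : IsBalPrefix (b ++ [a])
  | wrap {b : List (Act I T)} (i : ℕ) (hb : IsBalPrefix b) :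
      IsBalPrefix (.enterCtx i :: (b ++ [.leaveCtx]))

/-- An action is neither a `CopyAttr` nor a `PropagateAttrs`. -/
def NotCopyProp (a : Act I T) : Prop :=
  (∀ iDst ηDst iSrc ηSrc, a ≠ .copyAttr iDst ηDst iSrc ηSrc) ∧
    a ≠ .propagateAttrs

/-- `top_k(c₀ … c_n)`: the `k` topmost items of the stack (topmost first). -/
def topk (k : ℕ) (C : Stk I T) : List (ProdCtx I T) := (C.1 :: C.2).take k

section RoleCFG

variable {L : Type}

open Classical in
/-- `f_edge`: determines whether a CFG edge can be followed with the current
edge tag stack (`none` = undefined, i.e. the edge may not be followed), and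
returns the updated edge tag stack.  The tag stack is a list with its top as
the head. -/
noncomputable def fEdge (Eentry Eexit : Set (V × V)) (ledge : V × V → L)
    (S : List L) (e : V × V) : Option (List L) :=
  if e ∈ Eentry then some (ledge e :: S)
  else if e ∈ Eexit then
    match S with
    | [] => none
    | l :: S' => if ledge e = l then some S' else none
  else some S

/-- `f_stack`: how traversing a path mutates the edge tag stack
(`none` if some step is undefined). -/
noncomputable def fStack (Eentry Eexit : Set (V × V)) (ledge : V × V → L) :
    List V → List L → Option (List L)
  | [], S => some S
  | [_], S => some S
  | v₁ :: v₂ :: w', S =>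
      (fEdge Eentry Eexit ledge S (v₁, v₂)).bind
        (fStack Eentry Eexit ledge (v₂ :: w'))

/-- A path is valid from `v₀` if it starts at `v₀`, each pair of consecutive
vertices is an edge of `E_r`, and `f_edge` is defined at every step starting
from the empty edge tag stack. -/
def ValidPath (Er Eentry Eexit : Set (V × V)) (ledge : V × V → L) (v₀ : V)
    (w : List V) : Prop :=
  w.head? = some v₀ ∧ w.Chain' (fun a b => (a, b) ∈ Er) ∧
    (fStack Eentry Eexit ledge w []).isSome

/-- `f_e(w) = f_pErr(w, ⟨c_init⟩)`, where `c_init` is the single production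
context with empty attribute map. -/
def fE (sub : T → T → Prop) [DecidableRel sub] (aNode : V → Act I T)
    (w : List V) : Set (Viol I T) :=
  fPErr sub aNode w (emptyCtx 0, [])

/-! ### Auxiliary lemmas -/

lemma fStack_nil (Ee Ex : Set (V × V)) (le : V × V → L) (S : List L) :
    fStack Ee Ex le [] S = some S := rfl

lemma fStack_single (Ee Ex : Set (V × V)) (le : V × V → L) (v : V) (S : List L) :
    fStack Ee Ex le [v] S = some S := rfl

lemma fStack_cons_cons (Ee Ex : Set (V × V)) (le : V × V → L) (a b : V)
    (t : List V) (S : List L) :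
    fStack Ee Ex le (a :: b :: t) S
      = (fEdge Ee Ex le S (a, b)).bind (fStack Ee Ex le (b :: t)) := rfl

lemma fStack_append (Ee Ex : Set (V × V)) (le : V × V → L) (x : List V) (v : V)
    (y : List V) (S : List L) :
    fStack Ee Ex le (x ++ v :: y) S
      = (fStack Ee Ex le (x ++ [v]) S).bind (fStack Ee Ex le (v :: y)) := by
  induction x generalizing S with
  | nil => simp [fStack_single]
  | cons a x ih =>
    cases x with
    | nil =>
      simp only [List.nil_append, List.cons_append, fStack_cons_cons]
      cases fEdge Ee Ex le S (a, v) <;> simp [fStack_single]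
    | cons b x =>
      simp only [List.cons_append, fStack_cons_cons]
      cases h : fEdge Ee Ex le S (a, b) with
      | none => simp [h]
      | some S₁ => simpa [h] using ih S₁

lemma fPCtx_append (aNode : V → Act I T) (x y : List V) (C : Stk I T) :
    fPCtx aNode (x ++ y) C = fPCtx aNode y (fPCtx aNode x C) := by
  induction x generalizing C with
  | nil => rfl
  | cons a x ih => simp [fPCtx, ih]

/-- Every element of the final tag stack is either inherited from the initial
stack (with the part above it handled uniformly), or was pushed by a traversal
of an entry edge and survived until the end. -/
lemma stack_elem_cases (Ee Ex : Set (V × V)) (le : V × V → L) :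
    ∀ (w : List V) (S S' : List L), fStack Ee Ex le w S = some S' →
    ∀ d : ℕ, d < S'.length →
    (∃ P, S = P ++ S'.drop d ∧
      ∀ Z, fStack Ee Ex le w (P ++ Z) = some (S'.take d ++ Z)) ∨
    (∃ x u v y, w = x ++ u :: v :: y ∧ (u, v) ∈ Ee ∧
      S'.drop d = le (u, v) :: S'.drop (d + 1) ∧
      fStack Ee Ex le (x ++ [u]) S = some (S'.drop (d + 1)) ∧
      ∀ Z, fStack Ee Ex le (v :: y) Z = some (S'.take d ++ Z)) := by
  intro w
  induction w with
  | nil =>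
    intro S S' h d hd
    rw [fStack_nil] at h
    obtain rfl : S = S' := by injection h
    exact Or.inl ⟨S.take d, (S.take_append_drop d).symm,
      fun Z => by rw [fStack_nil]⟩
  | cons v₁ w ih =>
    cases w with
    | nil =>
      intro S S' h d hd
      rw [fStack_single] at h
      obtain rfl : S = S' := by injection h
      exact Or.inl ⟨S.take d, (S.take_append_drop d).symm,
        fun Z => by rw [fStack_single]⟩
    | cons v₂ w' =>
      intro S S' h d hd
      rw [fStack_cons_cons] at h
      cases hE : fEdge Ee Ex le S (v₁, v₂) with
      | none => rw [hE] at h; exact absurd h (by simp)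
      | some S₁ =>
        rw [hE] at h; rw [show (some S₁).bind (fStack Ee Ex le (v₂ :: w')) = fStack Ee Ex le (v₂ :: w') S₁ from rfl] at h
        rcases ih S₁ S' h d hd with ⟨P₁, hP₁, hZ⟩ | ⟨x, u, v, y, hxy, hEe, hdrop, hpre, hsuf⟩
        · -- inherited through the first edge
          by_cases h1 : (v₁, v₂) ∈ Ee
          · have hS₁ : S₁ = le (v₁, v₂) :: S := by
              simp [fEdge, h1] at hE; exact hE.symm
            subst hS₁
            cases P₁ with
            | nil =>
              simp only [List.nil_append] at hP₁
              refine Or.inr ⟨[], v₁, v₂, w', rfl, h1, ?_, ?_, ?_⟩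
              · have ht : S'.drop (d + 1) = S := by
                  have := congrArg List.tail hP₁
                  simpa [List.tail_drop] using this.symm
                rw [ht, ← hP₁]
              · have ht : S'.drop (d + 1) = S := by
                  have := congrArg List.tail hP₁
                  simpa [List.tail_drop] using this.symm
                rw [ht]; exact fStack_single _ _ _ _ _
              · intro Z; simpa using hZ Z
            | cons p P₁' =>
              obtain ⟨rfl, hS⟩ : p = le (v₁, v₂) ∧ S = P₁' ++ S'.drop d := by
                rw [List.cons_append] at hP₁; injection hP₁ with g1 g2; exact ⟨g1.symm, g2⟩
              refine Or.inl ⟨P₁', hS, fun Z => ?_⟩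
              rw [fStack_cons_cons]
              have : fEdge Ee Ex le (P₁' ++ Z) (v₁, v₂)
                  = some (le (v₁, v₂) :: (P₁' ++ Z)) := by simp [fEdge, h1]
              rw [this]
              simpa using hZ Z
          · by_cases h2 : (v₁, v₂) ∈ Ex
            · cases S with
              | nil => simp [fEdge, h1, h2] at hE
              | cons t S₀ =>
                simp only [fEdge, if_neg h1, if_pos h2] at hE
                have hlet : le (v₁, v₂) = t ∧ S₀ = S₁ := by
                  by_cases h3 : le (v₁, v₂) = t
                  · simp [h3] at hE; exact ⟨h3, hE⟩
                  · simp [h3] at hE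
                obtain ⟨h3, rfl⟩ := hlet
                refine Or.inl ⟨le (v₁, v₂) :: P₁, by rw [List.cons_append, ← hP₁, h3],
                  fun Z => ?_⟩
                rw [fStack_cons_cons]
                have : fEdge Ee Ex le ((le (v₁, v₂) :: P₁) ++ Z) (v₁, v₂)
                    = some (P₁ ++ Z) := by simp [fEdge, h1, h2]
                rw [this]; exact hZ Z
            · have hS₁ : S₁ = S := by simp [fEdge, h1, h2] at hE; exact hE.symm
              subst hS₁
              refine Or.inl ⟨P₁, hP₁, fun Z => ?_⟩
              rw [fStack_cons_cons]
              have : fEdge Ee Ex le (P₁ ++ Z) (v₁, v₂) = some (P₁ ++ Z) := by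
                simp [fEdge, h1, h2]
              rw [this]; exact hZ Z
        · -- pushed in the tail
          refine Or.inr ⟨v₁ :: x, u, v, y, by rw [hxy]; rfl, hEe, hdrop, ?_, hsuf⟩
          cases x with
          | nil =>
            obtain ⟨rfl, rfl⟩ : v₂ = u ∧ w' = v :: y := by
              simp at hxy; exact ⟨hxy.1, hxy.2⟩
            simp only [List.nil_append] at hpre
            rw [fStack_single] at hpre
            obtain rfl : S₁ = S'.drop (d + 1) := by injection hpre
            simp only [List.nil_append] at *
            rw [show (([v₁] ++ [v₂]) : List V) = (v₁ :: v₂ :: ([] : List V)) from rfl,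
              fStack_cons_cons, hE]
            rfl
          | cons a x' =>
            rw [List.cons_append] at hxy
            injection hxy with hA hW
            subst hA
            rw [show ((v₁ :: v₂ :: x') ++ [u]) = (v₁ :: v₂ :: (x' ++ [u])) from rfl,
              fStack_cons_cons, hE]
            exact hpre

/-- Processing a single node acts uniformly. -/
lemma node_step (aNode : V → Act I T) (v : V) (hv : NotCopyProp (aNode v))
    (f : ProdCtx I T) (g D₁ D₂ : List (ProdCtx I T))
    (hD₁ : D₁ ≠ []) (hD₂ : D₂ ≠ []) (hg : aNode v = Act.leaveCtx → g ≠ []) :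
    ∃ f₁ g₁ D₁' D₂',
      fACtx (f, g ++ D₁) (aNode v) = (f₁, g₁ ++ D₁') ∧
      fACtx (f, g ++ D₂) (aNode v) = (f₁, g₁ ++ D₂') ∧
      D₁'.length = D₁.length ∧ D₂'.length = D₂.length ∧
      ((aNode v = Act.leaveCtx ∧ g₁.length + 1 = g.length) ∨
       ((∃ i, aNode v = Act.enterCtx i) ∧ g₁.length = g.length + 1) ∨
       (aNode v ≠ Act.leaveCtx ∧ (∀ i, aNode v ≠ Act.enterCtx i) ∧
         g₁.length = g.length)) := by
  rcases D₁ with _ | ⟨d₁, D₁t⟩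
  · exact absurd rfl hD₁
  rcases D₂ with _ | ⟨d₂, D₂t⟩
  · exact absurd rfl hD₂
  cases hv' : aNode v with
  | writeAttr i η t =>
    by_cases hi : i = 0
    · subst hi
      cases g with
      | nil =>
        refine ⟨f, [], (d₁.1, updMap d₁.2 f.1 η t) :: D₁t,
          (d₂.1, updMap d₂.2 f.1 η t) :: D₂t, ?_, ?_, by simp, by simp, ?_⟩
        · simp [fACtx, putA]
        · simp [fACtx, putA]
        · exact Or.inr (Or.inr ⟨by simp [hv'], by simp [hv'], rfl⟩)
      | cons c g' =>
        refine ⟨f, (c.1, updMap c.2 f.1 η t) :: g', d₁ :: D₁t, d₂ :: D₂t,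
          ?_, ?_, rfl, rfl, ?_⟩
        · simp [fACtx, putA]
        · simp [fACtx, putA]
        · exact Or.inr (Or.inr ⟨by simp [hv'], by simp [hv'], by simp⟩)
    · refine ⟨(f.1, updMap f.2 i η t), g, d₁ :: D₁t, d₂ :: D₂t, ?_, ?_, rfl, rfl, ?_⟩
      · cases hgg : g ++ d₁ :: D₁t with
        | nil => simp at hgg
        | cons c r => simp [fACtx, putA, hgg, hi]
      · cases hgg : g ++ d₂ :: D₂t with
        | nil => simp at hgg
        | cons c r => simp [fACtx, putA, hgg, hi]
      · exact Or.inr (Or.inr ⟨by simp [hv'], by simp [hv'], rfl⟩)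
  | readAttr i η t =>
    exact ⟨f, g, _, _, rfl, rfl, rfl, rfl,
      Or.inr (Or.inr ⟨by simp [hv'], by simp [hv'], rfl⟩)⟩
  | copyAttr i1 e1 i2 e2 => exact absurd hv' (hv.1 i1 e1 i2 e2)
  | checkAttrType i η t =>
    exact ⟨f, g, _, _, rfl, rfl, rfl, rfl,
      Or.inr (Or.inr ⟨by simp [hv'], by simp [hv'], rfl⟩)⟩
  | propagateAttrs => exact absurd hv' hv.2
  | beginEvalMetaAction i =>
    exact ⟨f, g, _, _, rfl, rfl, rfl, rfl,
      Or.inr (Or.inr ⟨by simp [hv'], by simp [hv'], rfl⟩)⟩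
  | endEvalMetaAction =>
    exact ⟨f, g, _, _, rfl, rfl, rfl, rfl,
      Or.inr (Or.inr ⟨by simp [hv'], by simp [hv'], rfl⟩)⟩
  | enterCtx i =>
    refine ⟨emptyCtx i, f :: g, d₁ :: D₁t, d₂ :: D₂t, ?_, ?_, rfl, rfl,
      Or.inr (Or.inl ⟨⟨i, rfl⟩, by simp⟩)⟩
    · simp [fACtx, pushA]
    · simp [fACtx, pushA]
  | leaveCtx =>
    cases g with
    | nil => exact absurd (hg hv') (by simp)
    | cons c g' =>
      exact ⟨c, g', d₁ :: D₁t, d₂ :: D₂t, by simp [fACtx, popA],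
        by simp [fACtx, popA], rfl, rfl, Or.inl ⟨rfl, by simp⟩⟩
  | nop =>
    exact ⟨f, g, _, _, rfl, rfl, rfl, rfl,
      Or.inr (Or.inr ⟨by simp [hv'], by simp [hv'], rfl⟩)⟩
  | ignoreBranchAction =>
    exact ⟨f, g, _, _, rfl, rfl, rfl, rfl,
      Or.inr (Or.inr ⟨by simp [hv'], by simp [hv'], rfl⟩)⟩

open Classical in
/-- Along a path whose tag-stack behavior is uniform in everything below the
current tag stack, the production context stack evolves uniformly. -/
lemma suffix_ctx_align (Er Ee Ex : Set (V × V)) (le : V × V → L)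
    (aNode : V → Act I T)
    (hDisj : Disjoint Ee Ex)
    (ha : ∀ v : V, NotCopyProp (aNode v))
    (hbEntry : ∀ e ∈ Er, e ∈ Ee ↔ ∃ i, aNode e.1 = Act.enterCtx i)
    (hbExit : ∀ e ∈ Er, e ∈ Ex ↔ aNode e.2 = Act.leaveCtx) :
    ∀ (zt : List V) (v₁ : V) (Tg Qg : List L),
    (∀ Z, fStack Ee Ex le (v₁ :: zt) (Tg ++ Z) = some (Qg ++ Z)) →
    (v₁ :: zt).Chain' (fun a b => (a, b) ∈ Er) →
    ∀ (f : ProdCtx I T) (g D₁ D₂ : List (ProdCtx I T)),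
    g.length = Tg.length + (if aNode v₁ = Act.leaveCtx then 1 else 0) →
    D₁ ≠ [] → D₂ ≠ [] →
    ∃ f' g' D₁' D₂',
      fPCtx aNode (v₁ :: zt) (f, g ++ D₁) = (f', g' ++ D₁') ∧
      fPCtx aNode (v₁ :: zt) (f, g ++ D₂) = (f', g' ++ D₂') ∧
      D₁'.length = D₁.length ∧ D₂'.length = D₂.length ∧
      Qg.length ≤ g'.length := by
  classical
  intro zt
  induction zt with
  | nil =>
    intro v₁ Tg Qg hz hch f g D₁ D₂ hlen hD₁ hD₂
    have hTQ : Tg = Qg := by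
      have := hz []
      rw [fStack_single] at this
      simpa using this
    subst hTQ
    have hg : aNode v₁ = Act.leaveCtx → g ≠ [] := by
      intro hv hnil
      rw [hnil, if_pos hv] at hlen
      simp at hlen
    obtain ⟨f₁, g₁, D₁', D₂', h1, h2, hl1, hl2, hcase⟩ :=
      node_step aNode v₁ (ha v₁) f g D₁ D₂ hD₁ hD₂ hg
    refine ⟨f₁, g₁, D₁', D₂', h1, h2, hl1, hl2, ?_⟩
    rcases hcase with ⟨hv, hlg⟩ | ⟨⟨i, hv⟩, hlg⟩ | ⟨hv, _, hlg⟩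
    · rw [hlen, if_pos hv] at hlg; omega
    · have : (if aNode v₁ = Act.leaveCtx then 1 else 0) = 0 := by
        rw [if_neg]; rw [hv]; simp
      rw [hlen, this] at hlg; omega
    · rw [hlen, if_neg hv] at hlg; omega
  | cons v₂ zt ih =>
    intro v₁ Tg Qg hz hch f g D₁ D₂ hlen hD₁ hD₂
    have hEr : (v₁, v₂) ∈ Er := (List.isChain_cons_cons.mp hch).1
    have hch₂ : (v₂ :: zt).Chain' (fun a b => (a, b) ∈ Er) :=
      (List.isChain_cons_cons.mp hch).2
    have hg : aNode v₁ = Act.leaveCtx → g ≠ [] := by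
      intro hv hnil
      rw [hnil, if_pos hv] at hlen
      simp at hlen
    obtain ⟨f₁, g₁, D₁', D₂', h1, h2, hl1, hl2, hcase⟩ :=
      node_step aNode v₁ (ha v₁) f g D₁ D₂ hD₁ hD₂ hg
    have hD₁' : D₁' ≠ [] := by
      intro hnil; rw [hnil] at hl1; simp at hl1; exact hD₁ (List.length_eq_zero_iff.mp hl1.symm)
    have hD₂' : D₂' ≠ [] := by
      intro hnil; rw [hnil] at hl2; simp at hl2; exact hD₂ (List.length_eq_zero_iff.mp hl2.symm)
    by_cases h1e : (v₁, v₂) ∈ Ee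
    · -- entry edge: v₁ is enterCtx, v₂ is not leaveCtx
      have hventer : ∃ i, aNode v₁ = Act.enterCtx i := (hbEntry _ hEr).mp h1e
      have hv₂ : aNode v₂ ≠ Act.leaveCtx := by
        intro hv2
        exact (Set.disjoint_left.mp hDisj h1e) ((hbExit _ hEr).mpr hv2)
      have hz₂ : ∀ Z, fStack Ee Ex le (v₂ :: zt) ((le (v₁, v₂) :: Tg) ++ Z)
          = some (Qg ++ Z) := by
        intro Z
        have := hz Z
        rw [fStack_cons_cons] at this
        have hE : fEdge Ee Ex le (Tg ++ Z) (v₁, v₂)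
            = some (le (v₁, v₂) :: (Tg ++ Z)) := by simp [fEdge, h1e]
        rw [hE] at this
        simpa using this
      have hlen₂ : g₁.length = (le (v₁, v₂) :: Tg).length
          + (if aNode v₂ = Act.leaveCtx then 1 else 0) := by
        rw [if_neg hv₂]
        rcases hcase with ⟨hv, _⟩ | ⟨_, hlg⟩ | ⟨_, hne, _⟩
        · obtain ⟨i, hvi⟩ := hventer; rw [hvi] at hv; simp at hv
        · obtain ⟨i, hvi⟩ := hventer
          rw [hlen, if_neg (by rw [hvi]; simp)] at hlg
          simp [hlg]
        · obtain ⟨i, hvi⟩ := hventer; exact absurd hvi (hne i)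
      obtain ⟨f', g', D₁'', D₂'', k1, k2, kl1, kl2, kQ⟩ :=
        ih v₂ (le (v₁, v₂) :: Tg) Qg hz₂ hch₂ f₁ g₁ D₁' D₂' hlen₂ hD₁' hD₂'
      refine ⟨f', g', D₁'', D₂'', ?_, ?_, by omega, by omega, kQ⟩
      · show fPCtx aNode (v₂ :: zt) (fACtx (f, g ++ D₁) (aNode v₁)) = _
        rw [h1]; exact k1
      · show fPCtx aNode (v₂ :: zt) (fACtx (f, g ++ D₂) (aNode v₁)) = _
        rw [h2]; exact k2
    · by_cases h2e : (v₁, v₂) ∈ Ex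
      · -- exit edge: v₂ is leaveCtx, v₁ is not enterCtx
        have hv₂ : aNode v₂ = Act.leaveCtx := (hbExit _ hEr).mp h2e
        have hv₁ : ∀ i, aNode v₁ ≠ Act.enterCtx i := by
          intro i hv1
          exact h1e ((hbEntry _ hEr).mpr ⟨i, hv1⟩)
        -- Tg must be nonempty with matching top
        rcases Tg with _ | ⟨t, Tg'⟩
        · exfalso
          have := hz []
          rw [fStack_cons_cons] at this
          have hE : fEdge Ee Ex le ([] ++ []) (v₁, v₂) = none := by
            simp [fEdge, h1e, h2e]
          rw [hE] at this; simp at this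
        have htop : le (v₁, v₂) = t := by
          by_contra hne
          have := hz []
          rw [fStack_cons_cons] at this
          have hE : fEdge Ee Ex le ((t :: Tg') ++ []) (v₁, v₂) = none := by
            simp [fEdge, h1e, h2e, hne]
          rw [hE] at this; simp at this
        have hz₂ : ∀ Z, fStack Ee Ex le (v₂ :: zt) (Tg' ++ Z) = some (Qg ++ Z) := by
          intro Z
          have := hz Z
          rw [fStack_cons_cons] at this
          have hE : fEdge Ee Ex le ((t :: Tg') ++ Z) (v₁, v₂)
              = some (Tg' ++ Z) := by simp [fEdge, h1e, h2e, htop]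
          rw [hE] at this
          simpa using this
        have hlen₂ : g₁.length = Tg'.length
            + (if aNode v₂ = Act.leaveCtx then 1 else 0) := by
          rw [if_pos hv₂]
          rcases hcase with ⟨hv, hlg⟩ | ⟨⟨i, hvi⟩, _⟩ | ⟨hv, _, hlg⟩
          · rw [hlen, if_pos hv] at hlg; simp at hlg ⊢; omega
          · exact absurd hvi (hv₁ i)
          · rw [hlen, if_neg hv] at hlg; simp at hlg ⊢; omega
        obtain ⟨f', g', D₁'', D₂'', k1, k2, kl1, kl2, kQ⟩ :=
          ih v₂ Tg' Qg hz₂ hch₂ f₁ g₁ D₁' D₂' hlen₂ hD₁' hD₂'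
        refine ⟨f', g', D₁'', D₂'', ?_, ?_, by omega, by omega, kQ⟩
        · show fPCtx aNode (v₂ :: zt) (fACtx (f, g ++ D₁) (aNode v₁)) = _
          rw [h1]; exact k1
        · show fPCtx aNode (v₂ :: zt) (fACtx (f, g ++ D₂) (aNode v₁)) = _
          rw [h2]; exact k2
      · -- neutral edge
        have hv₂ : aNode v₂ ≠ Act.leaveCtx := by
          intro hv2; exact h2e ((hbExit _ hEr).mpr hv2)
        have hz₂ : ∀ Z, fStack Ee Ex le (v₂ :: zt) (Tg ++ Z) = some (Qg ++ Z) := by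
          intro Z
          have := hz Z
          rw [fStack_cons_cons] at this
          have hE : fEdge Ee Ex le (Tg ++ Z) (v₁, v₂) = some (Tg ++ Z) := by
            simp [fEdge, h1e, h2e]
          rw [hE] at this
          simpa using this
        have hlen₂ : g₁.length = Tg.length
            + (if aNode v₂ = Act.leaveCtx then 1 else 0) := by
          rw [if_neg hv₂]
          rcases hcase with ⟨hv, hlg⟩ | ⟨⟨i, hvi⟩, _⟩ | ⟨hv, _, hlg⟩
          · rw [hlen, if_pos hv] at hlg; omega
          · exact absurd ((hbEntry _ hEr).mpr ⟨i, hvi⟩) h1e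
          · rw [hlen, if_neg hv] at hlg; omega
        obtain ⟨f', g', D₁'', D₂'', k1, k2, kl1, kl2, kQ⟩ :=
          ih v₂ Tg Qg hz₂ hch₂ f₁ g₁ D₁' D₂' hlen₂ hD₁' hD₂'
        refine ⟨f', g', D₁'', D₂'', ?_, ?_, by omega, by omega, kQ⟩
        · show fPCtx aNode (v₂ :: zt) (fACtx (f, g ++ D₁) (aNode v₁)) = _
          rw [h1]; exact k1
        · show fPCtx aNode (v₂ :: zt) (fACtx (f, g ++ D₂) (aNode v₁)) = _
          rw [h2]; exact k2

/-- Splicing out the part of a violating path between two surviving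
traversals of the same entry edge yields a shorter violating path. -/
lemma splice_core (sub : T → T → Prop) [DecidableRel sub]
    (Er Eentry Eexit : Set (V × V)) (aNode : V → Act I T)
    (ledge : V × V → L) (v₀ : V)
    (hEntrySub : Eentry ⊆ Er)
    (hDisj : Disjoint Eentry Eexit)
    (ha : ∀ v : V, NotCopyProp (aNode v))
    (hbEntry : ∀ e ∈ Er, e ∈ Eentry ↔ ∃ i, aNode e.1 = Act.enterCtx i)
    (hbExit : ∀ e ∈ Er, e ∈ Eexit ↔ aNode e.2 = Act.leaveCtx)
    (hdEntryTgt : ∀ e ∈ Eentry, aNode e.2 ≠ Act.leaveCtx)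
    (vₑ : V) (w : List V)
    (hvalid : ValidPath Er Eentry Eexit ledge v₀ w)
    (hlast : w.getLast? = some vₑ)
    (herr : fE sub aNode w ≠ ∅)
    (u v : V) (hEe : (u, v) ∈ Eentry)
    (xA yA xB yB : List V)
    (hwA : w = xA ++ u :: v :: yA) (hwB : w = xB ++ u :: v :: yB)
    (hlt : xA.length < xB.length)
    (γ Q : List L)
    (hsA : fStack Eentry Eexit ledge (xA ++ [u]) [] = some γ)
    (hyB : ∀ Z, fStack Eentry Eexit ledge (v :: yB) Z = some (Q ++ Z))
    (hQ : Q ≠ []) :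
    ∃ w' : List V, ValidPath Er Eentry Eexit ledge v₀ w' ∧
      w'.getLast? = some vₑ ∧ fE sub aNode w' ≠ ∅ ∧ w'.length < w.length := by
  classical
  set w' : List V := xA ++ u :: v :: yB with hw'
  have hras : ∀ (x y : List V), x ++ u :: v :: y = (x ++ [u]) ++ (v :: y) := by
    intro x y; simp
  -- length
  have hlen : w'.length < w.length := by
    rw [hw', hwB]; simp; omega
  -- head
  have hhead : w'.head? = some v₀ := by
    have h0 := hvalid.1
    rw [hwA] at h0
    rw [hw']
    cases xA <;> simpa using h0
  -- chain
  have hchA : (xA ++ [u]).Chain' (fun a b => (a, b) ∈ Er) := by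
    have := hvalid.2.1
    rw [hwA, hras] at this
    exact (List.isChain_append.mp this).1
  have hchB : (v :: yB).Chain' (fun a b => (a, b) ∈ Er) := by
    have := hvalid.2.1
    rw [hwB, hras] at this
    exact (List.isChain_append.mp this).2.1
  have hchain : w'.Chain' (fun a b => (a, b) ∈ Er) := by
    rw [hw', hras]
    refine List.isChain_append.mpr ⟨hchA, hchB, ?_⟩
    intro a ha' b hb'
    rw [List.getLast?_concat] at ha'
    simp at ha' hb'
    subst ha'; subst hb'
    exact hEntrySub hEe
  -- tag stack
  have hstk : fStack Eentry Eexit ledge w' []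
      = some (Q ++ ledge (u, v) :: γ) := by
    rw [hw', fStack_append, hsA]
    show fStack Eentry Eexit ledge (u :: v :: yB) γ = _
    rw [fStack_cons_cons]
    have hE : fEdge Eentry Eexit ledge γ (u, v)
        = some (ledge (u, v) :: γ) := by simp [fEdge, hEe]
    rw [hE]
    exact hyB _
  -- last vertex
  have hgl : ∀ (l₁ : List V), (l₁ ++ v :: yB).getLast? = (v :: yB).getLast? :=
    fun l₁ => List.getLast?_append_of_ne_nil l₁ (by simp)
  have hlastB : (v :: yB).getLast? = some vₑ := by
    have := hlast
    rw [hwB, hras, hgl] at this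
    exact this
  have hlast' : w'.getLast? = some vₑ := by
    rw [hw', hras, hgl]
    exact hlastB
  -- the production context stacks at the end agree on the top two frames
  obtain ⟨i, hui⟩ := (hbEntry (u, v) (hEntrySub hEe)).mp hEe
  have hCA : fPCtx aNode (xA ++ [u]) (emptyCtx 0, [])
      = (emptyCtx i, (fPCtx aNode xA (emptyCtx 0, [])).1
          :: (fPCtx aNode xA (emptyCtx 0, [])).2) := by
    rw [fPCtx_append]
    show fACtx _ (aNode u) = _
    rw [hui]; rfl
  have hCB : fPCtx aNode (xB ++ [u]) (emptyCtx 0, [])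
      = (emptyCtx i, (fPCtx aNode xB (emptyCtx 0, [])).1
          :: (fPCtx aNode xB (emptyCtx 0, [])).2) := by
    rw [fPCtx_append]
    show fACtx _ (aNode u) = _
    rw [hui]; rfl
  have hvNotLeave : aNode v ≠ Act.leaveCtx := hdEntryTgt (u, v) hEe
  obtain ⟨f', g', D₁', D₂', k1, k2, _, _, kQ⟩ :=
    suffix_ctx_align Er Eentry Eexit ledge aNode hDisj ha hbEntry hbExit
      yB v [] Q (by intro Z; simpa using hyB Z) hchB
      (emptyCtx i)
      []
      ((fPCtx aNode xA (emptyCtx 0, [])).1 :: (fPCtx aNode xA (emptyCtx 0, [])).2)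
      ((fPCtx aNode xB (emptyCtx 0, [])).1 :: (fPCtx aNode xB (emptyCtx 0, [])).2)
      (by simp [if_neg hvNotLeave]) (by simp) (by simp)
  have hg'ne : g' ≠ [] := by
    intro hnil
    rw [hnil] at kQ
    simp at kQ
    exact hQ kQ
  have hCfull' : fPCtx aNode w' (emptyCtx 0, []) = (f', g' ++ D₁') := by
    rw [hw', hras, fPCtx_append, hCA]
    simpa using k1
  have hCfull : fPCtx aNode w (emptyCtx 0, []) = (f', g' ++ D₂') := by
    rw [hwB, hras, fPCtx_append, hCB]
    simpa using k2
  -- getA agrees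
  have hget : ∀ (i0 : ℕ) (η : I),
      getA ((f', g' ++ D₁') : Stk I T) i0 η = getA ((f', g' ++ D₂') : Stk I T) i0 η := by
    intro i0 η
    rcases g' with _ | ⟨c, g''⟩
    · exact absurd rfl hg'ne
    · rfl
  -- error is preserved
  have hwne : w ≠ [] := by intro h; rw [h] at hlast; simp at hlast
  have hw'ne : w' ≠ [] := by intro h; rw [h] at hlast'; simp at hlast'
  have hw0 : w = w.dropLast ++ [vₑ] := by
    conv_lhs => rw [← List.dropLast_concat_getLast hwne]
    congr 1
    rw [List.getLast?_eq_getLast hwne] at hlast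
    simpa using hlast
  have hw0' : w' = w'.dropLast ++ [vₑ] := by
    conv_lhs => rw [← List.dropLast_concat_getLast hw'ne]
    congr 1
    rw [List.getLast?_eq_getLast hw'ne] at hlast'
    simpa using hlast'
  set C0 := fPCtx aNode w.dropLast (emptyCtx 0, []) with hC0def
  set C0' := fPCtx aNode w'.dropLast (emptyCtx 0, []) with hC0'def
  have herr0 : fAErr sub C0 (aNode vₑ) ≠ ∅ := by
    have := herr
    unfold fE fPErr at this
    rw [hlast] at this
    exact this
  have hgoalerr : fAErr sub C0' (aNode vₑ) ≠ ∅ := by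
    cases haa : aNode vₑ with
    | readAttr i0 η t0 =>
      have hCw : fPCtx aNode w (emptyCtx 0, []) = C0 := by
        conv_lhs => rw [hw0]
        rw [fPCtx_append]
        show fACtx C0 (aNode vₑ) = C0
        rw [haa]
        rfl
      have hCw' : fPCtx aNode w' (emptyCtx 0, []) = C0' := by
        conv_lhs => rw [hw0']
        rw [fPCtx_append]
        show fACtx C0' (aNode vₑ) = C0'
        rw [haa]
        rfl
      have hC0 : C0 = (f', g' ++ D₂') := by rw [← hCw, hCfull]
      have hC0' : C0' = (f', g' ++ D₁') := by rw [← hCw', hCfull']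
      have hgeq : getA C0' i0 η = getA C0 i0 η := by
        rw [hC0, hC0']; exact hget i0 η
      rw [haa] at herr0
      show fAErr sub C0' (Act.readAttr i0 η t0) ≠ ∅
      have : fAErr sub C0' (Act.readAttr i0 η t0)
          = fAErr sub C0 (Act.readAttr i0 η t0) := by
        show (match getA C0' i0 η with
          | none => {Viol.missingAttr i0 η}
          | some tp => if sub tp t0 then ∅ else {Viol.badAttrT i0 η t0 tp}) =
          (match getA C0 i0 η with
          | none => {Viol.missingAttr i0 η}
          | some tp => if sub tp t0 then ∅ else {Viol.badAttrT i0 η t0 tp})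
        rw [hgeq]
      rw [this]
      exact herr0
    | checkAttrType i0 η t0 =>
      show ({Viol.attrTypeDynamicallyChecked i0 η t0} : Set (Viol I T)) ≠ ∅
      simp
    | copyAttr i1 e1 i2 e2 => exact absurd haa ((ha vₑ).1 i1 e1 i2 e2)
    | propagateAttrs => exact absurd haa (ha vₑ).2
    | writeAttr i0 η t0 => rw [haa] at herr0; exact absurd rfl herr0
    | beginEvalMetaAction i0 => rw [haa] at herr0; exact absurd rfl herr0
    | endEvalMetaAction => rw [haa] at herr0; exact absurd rfl herr0
    | enterCtx i0 => rw [haa] at herr0; exact absurd rfl herr0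
    | leaveCtx => rw [haa] at herr0; exact absurd rfl herr0
    | nop => rw [haa] at herr0; exact absurd rfl herr0
    | ignoreBranchAction => rw [haa] at herr0; exact absurd rfl herr0
  refine ⟨w', ⟨hhead, hchain, ?_⟩, hlast', ?_, hlen⟩
  · rw [hstk]; rfl
  · unfold fE fPErr
    rw [hlast']
    exact hgoalerr

/-- If the final tag stack of a violating path has a repeated tag at two
positions ≥ 1, there is a strictly shorter violating path. -/
lemma splice_shorter (sub : T → T → Prop) [DecidableRel sub]
    (Er Eentry Eexit : Set (V × V)) (aNode : V → Act I T)
    (ledge : V × V → L) (v₀ : V)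
    (hEntrySub : Eentry ⊆ Er)
    (hDisj : Disjoint Eentry Eexit)
    (ha : ∀ v : V, NotCopyProp (aNode v))
    (hbEntry : ∀ e ∈ Er, e ∈ Eentry ↔ ∃ i, aNode e.1 = Act.enterCtx i)
    (hbExit : ∀ e ∈ Er, e ∈ Eexit ↔ aNode e.2 = Act.leaveCtx)
    (hcEntry : ∀ l : L, ∃! e : V × V, e ∈ Eentry ∧ ledge e = l)
    (hdEntryTgt : ∀ e ∈ Eentry, aNode e.2 ≠ Act.leaveCtx)
    (vₑ : V) (w : List V) (S' : List L)
    (hS' : fStack Eentry Eexit ledge w [] = some S')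
    (hvalid : ValidPath Er Eentry Eexit ledge v₀ w)
    (hlast : w.getLast? = some vₑ)
    (herr : fE sub aNode w ≠ ∅)
    (d₁ d₂ : ℕ) (h₁ : d₁ < S'.length) (h₂ : d₂ < S'.length) (hne : d₁ ≠ d₂)
    (h01 : 1 ≤ d₁) (h02 : 1 ≤ d₂)
    (heq : S'.get ⟨d₁, h₁⟩ = S'.get ⟨d₂, h₂⟩) :
    ∃ w' : List V, ValidPath Er Eentry Eexit ledge v₀ w' ∧
      w'.getLast? = some vₑ ∧ fE sub aNode w' ≠ ∅ ∧ w'.length < w.length := by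
  classical
  rcases stack_elem_cases Eentry Eexit ledge w [] S' hS' d₁ h₁ with
    ⟨P, hP, _⟩ | ⟨x₁, u₁, v₁, y₁, hw₁, hE₁, hd₁, hp₁, hs₁⟩
  · exfalso
    have : S'.drop d₁ = [] := by
      rcases List.append_eq_nil_iff.mp hP.symm with ⟨_, h⟩
      exact h
    have := congrArg List.length this
    simp at this
    omega
  rcases stack_elem_cases Eentry Eexit ledge w [] S' hS' d₂ h₂ with
    ⟨P, hP, _⟩ | ⟨x₂, u₂, v₂, y₂, hw₂, hE₂, hd₂, hp₂, hs₂⟩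
  · exfalso
    have : S'.drop d₂ = [] := by
      rcases List.append_eq_nil_iff.mp hP.symm with ⟨_, h⟩
      exact h
    have := congrArg List.length this
    simp at this
    omega
  -- the two entry edges carry the same tag, hence are equal
  have htag₁ : ledge (u₁, v₁) = S'.get ⟨d₁, h₁⟩ := by
    have h5 : (ledge (u₁, v₁) :: S'.drop (d₁ + 1) : List L)
        = S'.get ⟨d₁, h₁⟩ :: S'.drop (d₁ + 1) := by
      rw [← hd₁]
      simpa using List.drop_eq_getElem_cons h₁
    injection h5
  have htag₂ : ledge (u₂, v₂) = S'.get ⟨d₂, h₂⟩ := by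
    have h5 : (ledge (u₂, v₂) :: S'.drop (d₂ + 1) : List L)
        = S'.get ⟨d₂, h₂⟩ :: S'.drop (d₂ + 1) := by
      rw [← hd₂]
      simpa using List.drop_eq_getElem_cons h₂
    injection h5
  obtain ⟨e0, _, hun⟩ := hcEntry (ledge (u₁, v₁))
  have he1 : (u₁, v₁) = e0 := hun (u₁, v₁) ⟨hE₁, rfl⟩
  have he2 : (u₂, v₂) = e0 := hun (u₂, v₂) ⟨hE₂, by rw [htag₂, ← heq, ← htag₁]⟩
  have heuv : u₂ = u₁ ∧ v₂ = v₁ := by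
    have := he2.trans he1.symm
    exact ⟨congrArg Prod.fst this, congrArg Prod.snd this⟩
  obtain ⟨rfl, rfl⟩ := heuv
  -- the two prefixes have different lengths
  have hxne : x₁.length ≠ x₂.length := by
    intro hlen
    have hx12 : x₁ = x₂ :=
      (List.append_inj (hw₁.symm.trans hw₂) hlen).1
    rw [hx12] at hp₁
    have := hp₁.symm.trans hp₂
    have hdrop : S'.drop (d₁ + 1) = S'.drop (d₂ + 1) := by
      injection this
    have := congrArg List.length hdrop
    simp at this
    omega
  have htake : ∀ d : ℕ, 1 ≤ d → d < S'.length → S'.take d ≠ [] := by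
    intro d hd1 hd2 hnil
    have h6 : (S'.take d).length = 0 := by rw [hnil]; rfl
    rw [List.length_take] at h6
    omega
  rcases Nat.lt_or_ge x₁.length x₂.length with hlt | hge
  · exact splice_core sub Er Eentry Eexit aNode ledge v₀ hEntrySub hDisj ha
      hbEntry hbExit hdEntryTgt vₑ w hvalid hlast herr u₂ v₂ hE₁
      x₁ y₁ x₂ y₂ hw₁ hw₂ hlt (S'.drop (d₁ + 1)) (S'.take d₂) hp₁ hs₂
      (htake d₂ h02 h₂)
  · have hlt : x₂.length < x₁.length := by omega
    exact splice_core sub Er Eentry Eexit aNode ledge v₀ hEntrySub hDisj ha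
      hbEntry hbExit hdEntryTgt vₑ w hvalid hlast herr u₂ v₂ hE₁
      x₂ y₂ x₁ y₁ hw₂ hw₁ hlt (S'.drop (d₂ + 1)) (S'.take d₁) hp₂ hs₁
      (htake d₁ h01 h₁)

/-- Lemma 1: suppose the role CFG `(V_r, E_r)` with labeling
`a_node`, entry vertex `v₀`, tag set `L`, disjoint tagged edge sets
`E_entry, E_exit ⊆ E_r`, and tag assignment `l_edge` satisfies:
(a) no vertex is labeled `CopyAttr` or `PropagateAttrs`;
(b) an edge `(u, v) ∈ E_entry` iff `a_node(u) = EnterCtx(i)` for some `i`, and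
    `(u, v) ∈ E_exit` iff `a_node(v) = LeaveCtx`;
(c) every tag `l ∈ L` tags exactly one entry edge and exactly one exit edge;
(d) the target of every entry edge is not labeled `LeaveCtx`, and `v₀` and the
    final vertex `v_e` are not labeled `LeaveCtx`.
Then for every vertex `v_e`: if there exists a valid path `w_e` from `v₀` to
`v_e` with `f_e(w_e) ≠ ∅`, then there exists a valid path `w'_e` from `v₀` to
`v_e` with `f_e(w'_e) ≠ ∅` such that no tag occurs three or more times in the
tag stack `f_stack(w'_e, ε)`. -/
theorem exists_violating_path_without_triple_tag
    (sub : T → T → Prop) [DecidableRel sub] (hsubRefl : ∀ t : T, sub t t)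
    (Er Eentry Eexit : Set (V × V)) (aNode : V → Act I T)
    (ledge : V × V → L) (v₀ : V)
    (hEntrySub : Eentry ⊆ Er) (hExitSub : Eexit ⊆ Er)
    (hDisj : Disjoint Eentry Eexit)
    (ha : ∀ v : V, NotCopyProp (aNode v))
    (hbEntry : ∀ e ∈ Er, e ∈ Eentry ↔ ∃ i, aNode e.1 = Act.enterCtx i)
    (hbExit : ∀ e ∈ Er, e ∈ Eexit ↔ aNode e.2 = Act.leaveCtx)
    (hcEntry : ∀ l : L, ∃! e : V × V, e ∈ Eentry ∧ ledge e = l)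
    (hcExit : ∀ l : L, ∃! e : V × V, e ∈ Eexit ∧ ledge e = l)
    (hdEntryTgt : ∀ e ∈ Eentry, aNode e.2 ≠ Act.leaveCtx)
    (hdv₀ : aNode v₀ ≠ Act.leaveCtx)
    (vₑ : V) (hdvₑ : aNode vₑ ≠ Act.leaveCtx)
    (wₑ : List V)
    (hvalid : ValidPath Er Eentry Eexit ledge v₀ wₑ)
    (hlast : wₑ.getLast? = some vₑ)
    (herr : fE sub aNode wₑ ≠ ∅) :
    ∃ wₑ' : List V,
      ValidPath Er Eentry Eexit ledge v₀ wₑ' ∧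
      wₑ'.getLast? = some vₑ ∧
      fE sub aNode wₑ' ≠ ∅ ∧
      ∀ S' : List L, fStack Eentry Eexit ledge wₑ' [] = some S' →
        ¬ ∃ p q r : Fin S'.length, p ≠ q ∧ p ≠ r ∧ q ≠ r ∧
          S'.get p = S'.get q ∧ S'.get q = S'.get r := by
  classical
  suffices H : ∀ (n : ℕ) (w : List V), w.length ≤ n →
      ValidPath Er Eentry Eexit ledge v₀ w → w.getLast? = some vₑ →
      fE sub aNode w ≠ ∅ →
      ∃ w' : List V, ValidPath Er Eentry Eexit ledge v₀ w' ∧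
        w'.getLast? = some vₑ ∧ fE sub aNode w' ≠ ∅ ∧
        ∀ S' : List L, fStack Eentry Eexit ledge w' [] = some S' →
          ¬ ∃ p q r : Fin S'.length, p ≠ q ∧ p ≠ r ∧ q ≠ r ∧
            S'.get p = S'.get q ∧ S'.get q = S'.get r by
    exact H wₑ.length wₑ le_rfl hvalid hlast herr
  intro n
  induction n with
  | zero =>
    intro w hw hval _ _
    exfalso
    have h0 := hval.1
    rw [List.length_eq_zero_iff.mp (Nat.le_zero.mp hw)] at h0
    simp at h0
  | succ n ih =>
    intro w hw hval hl he
    obtain ⟨S', hS'⟩ := Option.isSome_iff_exists.mp hval.2.2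
    by_cases htr : ∃ p q r : Fin S'.length, p ≠ q ∧ p ≠ r ∧ q ≠ r ∧
        S'.get p = S'.get q ∧ S'.get q = S'.get r
    · obtain ⟨p, q, r, hpq, hpr, hqr, hv1, hv2⟩ := htr
      have main : ∀ (a b : Fin S'.length), a ≠ b → (a : ℕ) ≠ 0 → (b : ℕ) ≠ 0 →
          S'.get a = S'.get b →
          ∃ w' : List V, ValidPath Er Eentry Eexit ledge v₀ w' ∧
            w'.getLast? = some vₑ ∧ fE sub aNode w' ≠ ∅ ∧
            ∀ S'' : List L, fStack Eentry Eexit ledge w' [] = some S'' →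
              ¬ ∃ p q r : Fin S''.length, p ≠ q ∧ p ≠ r ∧ q ≠ r ∧
                S''.get p = S''.get q ∧ S''.get q = S''.get r := by
        intro a b hab ha0 hb0 hgeq
        obtain ⟨w', hv', hl', he', hlen'⟩ :=
          splice_shorter sub Er Eentry Eexit aNode ledge v₀ hEntrySub hDisj ha
            hbEntry hbExit hcEntry hdEntryTgt vₑ w S' hS' hval hl he
            a b a.isLt b.isLt (fun h => hab (Fin.ext h)) (by omega) (by omega)
            (by simpa using hgeq)
        exact ih w' (by omega) hv' hl' he'
      by_cases hp0 : (p : ℕ) = 0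
      · have hq0 : (q : ℕ) ≠ 0 := fun h => hpq (Fin.ext (by omega))
        have hr0 : (r : ℕ) ≠ 0 := fun h => hpr (Fin.ext (by omega))
        exact main q r hqr hq0 hr0 hv2
      · by_cases hq0 : (q : ℕ) = 0
        · have hr0 : (r : ℕ) ≠ 0 := fun h => hqr (Fin.ext (by omega))
          exact main p r hpr hp0 hr0 (hv1.trans hv2)
        · exact main p q hpq hp0 hq0 hv1
    · refine ⟨w, hval, hl, he, ?_⟩
      intro S'' hS''
      have hSS : S'' = S' := by
        have := hS''.symm.trans hS'
        injection this
      subst hSS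
      exact htr

end RoleCFG
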